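/- arXiv:1906.08579 — 2 statements merged into one kernel-verified Lean document; each statement's English description precedes it below -/
import Mathlib

section
/- Let P : [0,T] → L(X₁,X₂) be strongly continuous, and let Ψ⃖_{t,s} be the forward evolution family in L(X₁) solving Ψ⃖_{t,s} = U⃖_{t,s} − ∫_s^t Ψ⃖_{t,r} B(r) P(r) U⃖_{r,s} dr. Then P solves the backward Riccati integral equation P(t) = U⃗_{t,T} G U⃖_{T,t} + ∫_t^T U⃗_{t,r}{C(r) − P(r)B(r)P(r)} U⃖_{r,t} dr if and only if P(t) = U⃗_{t,T} G Ψ⃖_{T,t} + ∫_t^T U⃗_{t,r} C(r) Ψ⃖_{r,t} dr for each t ∈ [0,T]. -/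
/-!
Write `R_Ψ(t) x = U⃗_{t,T} G Ψ⃖_{T,t} x + ∫_t^T U⃗_{t,r} C(r) Ψ⃖_{r,t} x dr` (`riccatiRep`).
Substituting the Volterra equation of `Ψ⃖` into `R_Ψ`, exchanging the order of integration over
the triangle `t ≤ σ ≤ r ≤ T` and using `U⃗_{t,σ} U⃗_{σ,r} = U⃗_{t,r}` gives
`R_Ψ(t) x = R_U(t) x - ∫_t^T U⃗_{t,σ} R_Ψ(σ) B(σ) P(σ) U⃖_{σ,t} x dσ`.
The Riccati equation says exactly that `P` solves the same linear Volterra equation, and its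
bounded solutions are unique: iterating the equation bounds the difference of two solutions
by `c ‖x‖ (L (T - t))ⁿ / n!`.
-/

open MeasureTheory intervalIntegral Set Filter Topology Function

section StrongContinuity

variable {α X Y : Type*} [TopologicalSpace α] [NormedAddCommGroup X] [NormedSpace ℝ X]
  [NormedAddCommGroup Y] [NormedSpace ℝ Y]

theorem ContinuousOn.clm_apply_of_norm_le {F : α → X →L[ℝ] Y} {v : α → X} {s : Set α} {M : ℝ}
    (hv : ContinuousOn v s) (hF : ∀ x, ContinuousOn (fun a => F a x) s)
    (hFM : ∀ a ∈ s, ‖F a‖ ≤ M) : ContinuousOn (fun a => F a (v a)) s := by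
  intro a₀ ha₀
  rw [ContinuousWithinAt, tendsto_iff_norm_sub_tendsto_zero]
  have hlim : Tendsto (fun a => M * ‖v a - v a₀‖ + ‖F a (v a₀) - F a₀ (v a₀)‖)
      (𝓝[s] a₀) (𝓝 0) := by
    have h₁ := (tendsto_iff_norm_sub_tendsto_zero.1 (hv a₀ ha₀)).const_mul M
    have h₂ := tendsto_iff_norm_sub_tendsto_zero.1 (hF (v a₀) a₀ ha₀)
    simpa using h₁.add h₂
  refine squeeze_zero' (Eventually.of_forall fun _ => norm_nonneg _) ?_ hlim
  filter_upwards [self_mem_nhdsWithin] with a ha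
  calc ‖F a (v a) - F a₀ (v a₀)‖
      ≤ ‖F a (v a) - F a (v a₀)‖ + ‖F a (v a₀) - F a₀ (v a₀)‖ :=
        norm_sub_le_norm_sub_add_norm_sub _ _ _
    _ ≤ M * ‖v a - v a₀‖ + ‖F a (v a₀) - F a₀ (v a₀)‖ := by
      rw [← map_sub]
      gcongr
      exact (F a).le_of_opNorm_le (hFM a ha) _

theorem IsCompact.exists_norm_le_of_continuousOn_apply [CompleteSpace X] {F : α → X →L[ℝ] Y}
    {K : Set α} (hK : IsCompact K) (hF : ∀ x, ContinuousOn (fun a => F a x) K) :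
    ∃ M, ∀ a ∈ K, ‖F a‖ ≤ M :=
  (banach_steinhaus (g := fun a : K => F a) fun x =>
    (hK.exists_bound_of_continuousOn (hF x)).imp fun _ hC a => hC a a.2).imp
    fun _ hM a ha => hM ⟨a, ha⟩

theorem ContinuousOn.clm_apply_of_isCompact [CompleteSpace X] {F : α → X →L[ℝ] Y} {v : α → X}
    {s : Set α} (hs : IsCompact s) (hF : ∀ x, ContinuousOn (fun a => F a x) s)
    (hv : ContinuousOn v s) : ContinuousOn (fun a => F a (v a)) s := by
  obtain ⟨M, hM⟩ := hs.exists_norm_le_of_continuousOn_apply hF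
  exact hv.clm_apply_of_norm_le hF hM

end StrongContinuity

section Volterra

variable {X Y : Type*} [NormedAddCommGroup X] [NormedAddCommGroup Y] [NormedSpace ℝ Y]
  {D : ℝ → X → Y} {W : ℝ → ℝ → Y →L[ℝ] Y} {y : ℝ → X → ℝ → X} {a b c M K : ℝ}

theorem integral_sub_pow (b s : ℝ) (n : ℕ) :
    ∫ σ in s..b, (b - σ) ^ n = (b - s) ^ (n + 1) / (n + 1) := by
  simp [intervalIntegral.integral_comp_sub_left (fun u => u ^ n) b, integral_pow]

theorem norm_le_pow_div_factorial_of_volterra (hc : 0 ≤ c) (hK : 0 ≤ K)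
    (hDc : ∀ s ∈ Icc a b, ∀ v, ‖D s v‖ ≤ c * ‖v‖)
    (hW : ∀ s σ, a ≤ s → s ≤ σ → σ ≤ b → ‖W s σ‖ ≤ M)
    (hy : ∀ s ∈ Icc a b, ∀ v, ∀ σ ∈ Icc s b, ‖y s v σ‖ ≤ K * ‖v‖)
    (hD : ∀ s ∈ Icc a b, ∀ v, D s v = -∫ σ in s..b, W s σ (D σ (y s v σ))) (n : ℕ) :
    ∀ s ∈ Icc a b, ∀ v, ‖D s v‖ ≤ c * ‖v‖ * (M * K * (b - s)) ^ n / n.factorial := by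
  induction n with
  | zero => simpa using hDc
  | succ n ih =>
    intro s hs v
    have hM : 0 ≤ M := (norm_nonneg _).trans (hW s s hs.1 le_rfl hs.2)
    set A := M * c * K * ‖v‖ * (M * K) ^ n / n.factorial
    have hbound : ∀ σ ∈ Ioc s b, ‖W s σ (D σ (y s v σ))‖ ≤ A * (b - σ) ^ n := by
      intro σ hσ
      have hσ' : σ ∈ Icc a b := ⟨hs.1.trans hσ.1.le, hσ.2⟩
      have hbσ : 0 ≤ b - σ := sub_nonneg.2 hσ.2
      calc ‖W s σ (D σ (y s v σ))‖ ≤ M * ‖D σ (y s v σ)‖ :=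
            (W s σ).le_of_opNorm_le (hW s σ hs.1 hσ.1.le hσ.2) _
        _ ≤ M * (c * ‖y s v σ‖ * (M * K * (b - σ)) ^ n / n.factorial) := by
            gcongr
            exact ih σ hσ' _
        _ ≤ M * (c * (K * ‖v‖) * (M * K * (b - σ)) ^ n / n.factorial) := by
            gcongr
            exact hy s hs v σ (Ioc_subset_Icc_self hσ)
        _ = A * (b - σ) ^ n := by simp only [A]; rw [mul_pow]; ring
    rw [hD s hs v, norm_neg]
    calc _ ≤ ∫ σ in s..b, A * (b - σ) ^ n :=
          norm_integral_le_of_norm_le hs.2 (ae_of_all _ hbound)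
            (Continuous.intervalIntegrable (by fun_prop) _ _)
      _ = c * ‖v‖ * (M * K * (b - s)) ^ (n + 1) / (n + 1).factorial := by
          rw [intervalIntegral.integral_const_mul, integral_sub_pow, Nat.factorial_succ, mul_pow]
          simp only [A]
          push_cast
          field_simp
          ring

theorem eq_zero_of_volterra
    (hDc : ∀ s ∈ Icc a b, ∀ v, ‖D s v‖ ≤ c * ‖v‖)
    (hW : ∀ s σ, a ≤ s → s ≤ σ → σ ≤ b → ‖W s σ‖ ≤ M)
    (hy : ∀ s ∈ Icc a b, ∀ v, ∀ σ ∈ Icc s b, ‖y s v σ‖ ≤ K * ‖v‖)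
    (hD : ∀ s ∈ Icc a b, ∀ v, D s v = -∫ σ in s..b, W s σ (D σ (y s v σ)))
    {s : ℝ} (hs : s ∈ Icc a b) (v : X) : D s v = 0 := by
  have hDc' : ∀ s ∈ Icc a b, ∀ v, ‖D s v‖ ≤ max c 0 * ‖v‖ := fun s hs v =>
    (hDc s hs v).trans (by gcongr; exact le_max_left _ _)
  have hy' : ∀ s ∈ Icc a b, ∀ v, ∀ σ ∈ Icc s b, ‖y s v σ‖ ≤ max K 0 * ‖v‖ := fun s hs v σ hσ =>
    (hy s hs v σ hσ).trans (by gcongr; exact le_max_left _ _)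
  have hlim : Tendsto (fun n : ℕ => max c 0 * ‖v‖ * (M * max K 0 * (b - s)) ^ n / n.factorial)
      atTop (𝓝 0) := by
    simpa [mul_div_assoc] using
      (FloorSemiring.tendsto_pow_div_factorial_atTop (M * max K 0 * (b - s))).const_mul
        (max c 0 * ‖v‖)
  exact norm_le_zero_iff.1 <| ge_of_tendsto' hlim fun n =>
    norm_le_pow_div_factorial_of_volterra (le_max_right _ _) (le_max_right _ _) hDc' hW hy' hD n
      s hs v

theorem eq_of_volterra {P Q F : ℝ → X → Y} {cP cQ : ℝ}
    (hPc : ∀ s ∈ Icc a b, ∀ v, ‖P s v‖ ≤ cP * ‖v‖) (hQc : ∀ s ∈ Icc a b, ∀ v, ‖Q s v‖ ≤ cQ * ‖v‖)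
    (hW : ∀ s σ, a ≤ s → s ≤ σ → σ ≤ b → ‖W s σ‖ ≤ M)
    (hy : ∀ s ∈ Icc a b, ∀ v, ∀ σ ∈ Icc s b, ‖y s v σ‖ ≤ K * ‖v‖)
    (hP : ∀ s ∈ Icc a b, ∀ v, P s v = F s v - ∫ σ in s..b, W s σ (P σ (y s v σ)))
    (hQ : ∀ s ∈ Icc a b, ∀ v, Q s v = F s v - ∫ σ in s..b, W s σ (Q σ (y s v σ)))
    (hPi : ∀ s ∈ Icc a b, ∀ v, IntervalIntegrable (fun σ => W s σ (P σ (y s v σ))) volume s b)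
    (hQi : ∀ s ∈ Icc a b, ∀ v, IntervalIntegrable (fun σ => W s σ (Q σ (y s v σ))) volume s b)
    {s : ℝ} (hs : s ∈ Icc a b) (v : X) : P s v = Q s v := by
  refine sub_eq_zero.1 (eq_zero_of_volterra (D := fun s v => P s v - Q s v) (c := cP + cQ)
    (fun s hs v => ?_) hW hy (fun s hs v => ?_) hs v)
  · rw [add_mul]
    exact (norm_sub_le _ _).trans (add_le_add (hPc s hs v) (hQc s hs v))
  · simp only [map_sub]
    rw [integral_sub (hPi s hs v) (hQi s hs v), hP s hs v, hQ s hs v]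
    abel

end Volterra

section TriangleFubini

variable {E : Type*} [NormedAddCommGroup E] {f : ℝ → ℝ → E} {a b : ℝ}

theorem integrableOn_uncurry_of_continuousOn_of_norm_le {M : ℝ} (hab : a ≤ b)
    (hf₁ : ∀ σ ∈ Icc a b, ContinuousOn (fun r => f r σ) (Icc a b))
    (hf₂ : ∀ r ∈ Icc a b, ContinuousOn (f r) (Icc a b))
    (hM : ∀ r ∈ Icc a b, ∀ σ ∈ Icc a b, ‖f r σ‖ ≤ M) :
    IntegrableOn (uncurry f) (Icc a b ×ˢ Icc a b) := by
  set g : ℝ → ℝ → E := fun r σ => f (projIcc a b hab r) (projIcc a b hab σ)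
  have hproj : Continuous fun r => (projIcc a b hab r : ℝ) :=
    continuous_subtype_val.comp continuous_projIcc
  -- `g` is separately continuous on all of `ℝ × ℝ`, hence jointly measurable.
  have hg : StronglyMeasurable (uncurry g) :=
    stronglyMeasurable_uncurry_of_continuous_of_stronglyMeasurable
      (fun σ => (hf₁ _ (projIcc a b hab σ).2).comp_continuous hproj fun r => (projIcc a b hab r).2)
      (fun r => ((hf₂ _ (projIcc a b hab r).2).comp_continuous hproj
        fun σ => (projIcc a b hab σ).2).stronglyMeasurable)
  have hfg : EqOn (uncurry f) (uncurry g) (Icc a b ×ˢ Icc a b) := by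
    rintro ⟨r, σ⟩ ⟨hr, hσ⟩
    simp [g, uncurry, projIcc_of_mem hab hr, projIcc_of_mem hab hσ]
  refine (Measure.integrableOn_of_bounded (M := M) ?_ hg.aestronglyMeasurable ?_).congr_fun
    hfg.symm (measurableSet_Icc.prod measurableSet_Icc)
  · exact (isCompact_Icc.prod isCompact_Icc).measure_lt_top.ne
  · exact ae_of_all _ fun p => hM _ (projIcc a b hab p.1).2 _ (projIcc a b hab p.2).2

theorem integrable_prod_indicator_le (hf : IntegrableOn (uncurry f) (Icc a b ×ˢ Icc a b)) :
    Integrable (fun p : ℝ × ℝ => {p : ℝ × ℝ | p.2 ≤ p.1}.indicator (uncurry f) p)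
      ((volume.restrict (Ioc a b)).prod (volume.restrict (Ioc a b))) := by
  rw [Measure.prod_restrict]
  exact ((hf.mono_set (prod_mono Ioc_subset_Icc_self Ioc_subset_Icc_self)).indicator
    (measurableSet_le measurable_snd measurable_fst))

theorem setIntegral_Ioc_indicator_le_left [NormedSpace ℝ E] [CompleteSpace E] {r : ℝ}
    (hr : r ∈ Icc a b) :
    ∫ σ in Ioc a b, {p : ℝ × ℝ | p.2 ≤ p.1}.indicator (uncurry f) (r, σ) =
      ∫ σ in a..r, f r σ := by
  have hslice : (fun σ => {p : ℝ × ℝ | p.2 ≤ p.1}.indicator (uncurry f) (r, σ)) =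
      (Iic r).indicator (f r) := by
    ext σ; simp [indicator_apply]
  rw [hslice, setIntegral_indicator measurableSet_Iic, Ioc_inter_Iic, min_eq_right hr.2,
    integral_of_le hr.1]

theorem setIntegral_Ioc_indicator_le_right [NormedSpace ℝ E] [CompleteSpace E] {σ : ℝ}
    (hσ : σ ∈ Icc a b) :
    ∫ r in Ioc a b, {p : ℝ × ℝ | p.2 ≤ p.1}.indicator (uncurry f) (r, σ) =
      ∫ r in σ..b, f r σ := by
  have hslice : (fun r => {p : ℝ × ℝ | p.2 ≤ p.1}.indicator (uncurry f) (r, σ)) =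
      (Ici σ).indicator (fun r => f r σ) := by
    ext r; simp [indicator_apply]
  rw [hslice, integral_congr_ae (ae_restrict_of_ae
      (indicator_ae_eq_of_ae_eq_set Ioi_ae_eq_Ici.symm)), setIntegral_indicator measurableSet_Ioi,
    Ioc_inter_Ioi, max_eq_right hσ.1, integral_of_le hσ.2]

theorem integral_integral_swap_triangle [NormedSpace ℝ E] [CompleteSpace E] (hab : a ≤ b)
    (hf : IntegrableOn (uncurry f) (Icc a b ×ˢ Icc a b)) :
    ∫ r in a..b, ∫ σ in a..r, f r σ = ∫ σ in a..b, ∫ r in σ..b, f r σ := by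
  rw [integral_of_le hab, integral_of_le hab]
  calc ∫ r in Ioc a b, ∫ σ in a..r, f r σ
      = ∫ r in Ioc a b, ∫ σ in Ioc a b, {p : ℝ × ℝ | p.2 ≤ p.1}.indicator (uncurry f) (r, σ) :=
        setIntegral_congr_fun measurableSet_Ioc fun r hr =>
          (setIntegral_Ioc_indicator_le_left (Ioc_subset_Icc_self hr)).symm
    _ = ∫ σ in Ioc a b, ∫ r in Ioc a b, {p : ℝ × ℝ | p.2 ≤ p.1}.indicator (uncurry f) (r, σ) :=
        integral_integral_swap (integrable_prod_indicator_le hf)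
    _ = ∫ σ in Ioc a b, ∫ r in σ..b, f r σ :=
        setIntegral_congr_fun measurableSet_Ioc fun σ hσ =>
          setIntegral_Ioc_indicator_le_right (Ioc_subset_Icc_self hσ)

theorem intervalIntegrable_integral_triangle [NormedSpace ℝ E] [CompleteSpace E] (hab : a ≤ b)
    (hf : IntegrableOn (uncurry f) (Icc a b ×ˢ Icc a b)) :
    IntervalIntegrable (fun σ => ∫ r in σ..b, f r σ) volume a b := by
  rw [intervalIntegrable_iff_integrableOn_Ioc_of_le hab]
  exact (integrable_prod_indicator_le hf).integral_prod_right.congr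
    ((ae_restrict_iff' measurableSet_Ioc).2 (ae_of_all _ fun σ hσ =>
      setIntegral_Ioc_indicator_le_right (Ioc_subset_Icc_self hσ)))

end TriangleFubini

section ExtendById

variable {X : Type*} [NormedAddCommGroup X] [NormedSpace ℝ X] {Ψ : ℝ → ℝ → X →L[ℝ] X}
  {a b r σ : ℝ}

/-- Replacing `Ψ` by the identity below the diagonal makes the triangle integrand of the Fubini
step separately continuous on the whole square, the two pieces matching because `Ψ s s = id`. -/
noncomputable def extendById (Ψ : ℝ → ℝ → X →L[ℝ] X) (r σ : ℝ) : X →L[ℝ] X :=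
  if σ ≤ r then Ψ r σ else ContinuousLinearMap.id ℝ X

theorem extendById_of_le (h : σ ≤ r) : extendById Ψ r σ = Ψ r σ := if_pos h

theorem extendById_of_ge (h : r ≤ σ) (hid : Ψ r r = ContinuousLinearMap.id ℝ X) :
    extendById Ψ r σ = ContinuousLinearMap.id ℝ X := by
  unfold extendById
  split_ifs with h'
  · rwa [le_antisymm h' h]
  · rfl

theorem norm_extendById_le {M : ℝ}
    (hM : ∀ σ r, a ≤ σ → σ ≤ r → r ≤ b → ‖Ψ r σ‖ ≤ M) (hr : r ∈ Icc a b) (hσ : σ ∈ Icc a b) :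
    ‖extendById Ψ r σ‖ ≤ max M 1 := by
  unfold extendById
  split_ifs with h
  · exact (hM σ r hσ.1 h hr.2).trans (le_max_left _ _)
  · exact ContinuousLinearMap.norm_id_le.trans (le_max_right _ _)

theorem continuousOn_extendById_apply_left (hid : ∀ s ∈ Icc a b, Ψ s s = .id ℝ X)
    (hΨ : ∀ x, ContinuousOn (fun t => Ψ t σ x) (Icc σ b)) (hσ : σ ≤ b) (x : X) :
    ContinuousOn (fun r => extendById Ψ r σ x) (Icc a b) := by
  have hbelow : ContinuousOn (fun r => extendById Ψ r σ x) (Icc a σ) :=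
    continuousOn_const.congr fun r hr => by
      rw [extendById_of_ge hr.2 (hid r ⟨hr.1, hr.2.trans hσ⟩)]
  have habove : ContinuousOn (fun r => extendById Ψ r σ x) (Icc σ b) :=
    (hΨ x).congr fun r hr => by rw [extendById_of_le hr.1]
  exact (hbelow.union_of_isClosed habove isClosed_Icc isClosed_Icc).mono Icc_subset_Icc_union_Icc

theorem continuousOn_extendById_apply_right (hid : Ψ r r = .id ℝ X)
    (hΨ : ∀ x, ContinuousOn (fun s => Ψ r s x) (Icc a r)) (x : X) :
    ContinuousOn (fun σ => extendById Ψ r σ x) (Icc a b) := by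
  have hbelow : ContinuousOn (fun σ => extendById Ψ r σ x) (Icc a r) :=
    (hΨ x).congr fun σ hσ => by rw [extendById_of_le hσ.2]
  have habove : ContinuousOn (fun σ => extendById Ψ r σ x) (Icc r b) :=
    continuousOn_const.congr fun σ hσ => by rw [extendById_of_ge hσ.1 hid]
  exact (hbelow.union_of_isClosed habove isClosed_Icc isClosed_Icc).mono Icc_subset_Icc_union_Icc

end ExtendById

section RiccatiRepresentation

variable {X₁ X₂ : Type*} [NormedAddCommGroup X₁] [NormedSpace ℝ X₁]
  [NormedAddCommGroup X₂] [NormedSpace ℝ X₂]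
  {Ub : ℝ → ℝ → X₂ →L[ℝ] X₂} {C : ℝ → X₁ →L[ℝ] X₂} {G : X₁ →L[ℝ] X₂} {T a t : ℝ}
  {Ψ U : ℝ → ℝ → X₁ →L[ℝ] X₁}

noncomputable def riccatiRep (Ub : ℝ → ℝ → X₂ →L[ℝ] X₂) (C : ℝ → X₁ →L[ℝ] X₂)
    (G : X₁ →L[ℝ] X₂) (T : ℝ) (Ψ : ℝ → ℝ → X₁ →L[ℝ] X₁) (s : ℝ) (v : X₁) : X₂ :=
  Ub s T (G (Ψ T s v)) + ∫ r in s..T, Ub s r (C r (Ψ r s v))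

theorem norm_riccatiRep_le {MUb MΨ MC : ℝ}
    (hUb : ∀ t s, a ≤ t → t ≤ s → s ≤ T → ‖Ub t s‖ ≤ MUb)
    (hΨ : ∀ s t, a ≤ s → s ≤ t → t ≤ T → ‖Ψ t s‖ ≤ MΨ)
    (hC : ∀ r ∈ Icc a T, ‖C r‖ ≤ MC) (s : ℝ) (hs : s ∈ Icc a T) (v : X₁) :
    ‖riccatiRep Ub C G T Ψ s v‖ ≤ MUb * (‖G‖ + MC * (T - a)) * MΨ * ‖v‖ := by
  have hterm : ∀ r ∈ Icc s T, ∀ (K : ℝ) (L : X₁ →L[ℝ] X₂), ‖L‖ ≤ K →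
      ‖Ub s r (L (Ψ r s v))‖ ≤ MUb * (K * (MΨ * ‖v‖)) := fun r hr K L hL =>
    (Ub s r).le_of_opNorm_le_of_le (hUb s r hs.1 hr.1 hr.2) <| L.le_of_opNorm_le_of_le hL <|
      (Ψ r s).le_of_opNorm_le (hΨ s r hs.1 hr.1 hr.2) v
  have hint : ‖∫ r in s..T, Ub s r (C r (Ψ r s v))‖ ≤ MUb * (MC * (MΨ * ‖v‖)) * (T - a) := by
    refine (intervalIntegral.norm_integral_le_of_norm_le_const
      (C := MUb * (MC * (MΨ * ‖v‖))) fun r hr => ?_).trans ?_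
    · rw [uIoc_of_le hs.2] at hr
      exact hterm r (Ioc_subset_Icc_self hr) MC (C r) (hC r ⟨hs.1.trans hr.1.le, hr.2⟩)
    · rw [abs_of_nonneg (sub_nonneg.2 hs.2)]
      exact mul_le_mul_of_nonneg_left (by linarith [hs.1])
        ((norm_nonneg _).trans (hterm s ⟨le_rfl, hs.2⟩ MC (C s) (hC s hs)))
  calc ‖riccatiRep Ub C G T Ψ s v‖
      ≤ ‖Ub s T (G (Ψ T s v))‖ + ‖∫ r in s..T, Ub s r (C r (Ψ r s v))‖ := norm_add_le _ _
    _ ≤ MUb * (‖G‖ * (MΨ * ‖v‖)) + MUb * (MC * (MΨ * ‖v‖)) * (T - a) :=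
        add_le_add (hterm T ⟨hs.2, le_rfl⟩ _ G le_rfl) hint
    _ = MUb * (‖G‖ + MC * (T - a)) * MΨ * ‖v‖ := by ring

variable [CompleteSpace X₁]

theorem continuousOn_family_apply_right
    (hΨ₂ : ∀ x, ∀ t ∈ Icc a T, ContinuousOn (fun s => Ψ t s x) (Icc a t))
    (ht : a ≤ t) {y : ℝ → X₁} (hy : ContinuousOn y (Icc t T)) {r : ℝ} (hr : r ∈ Icc t T) :
    ContinuousOn (fun σ => Ψ r σ (y σ)) (Icc t r) :=
  (hy.mono (Icc_subset_Icc_right hr.2)).clm_apply_of_isCompact isCompact_Icc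
    fun x => (hΨ₂ x r ⟨ht.trans hr.1, hr.2⟩).mono (Icc_subset_Icc_left ht)

theorem intervalIntegrable_terminalTerm
    (hΨ₂ : ∀ x, ∀ t ∈ Icc a T, ContinuousOn (fun s => Ψ t s x) (Icc a t))
    (ht : t ∈ Icc a T) {y : ℝ → X₁} (hy : ContinuousOn y (Icc t T)) :
    IntervalIntegrable (fun σ => Ub t T (G (Ψ T σ (y σ)))) volume t T :=
  (((Ub t T).comp G).continuous.comp_continuousOn <|
    continuousOn_family_apply_right hΨ₂ ht.1 hy ⟨ht.2, le_rfl⟩).intervalIntegrable_of_Icc ht.2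

variable [CompleteSpace X₂]

theorem continuousOn_riccatiIntegrand
    (hUb : ∀ y, ∀ t ∈ Icc a T, ContinuousOn (fun s => Ub t s y) (Icc t T))
    (hC : ∀ x, ContinuousOn (fun t => C t x) (Icc a T)) {s : ℝ} (hs : s ∈ Icc a T) {w : ℝ → X₁}
    (hw : ContinuousOn w (Icc s T)) : ContinuousOn (fun r => Ub s r (C r (w r))) (Icc s T) :=
  (hw.clm_apply_of_isCompact isCompact_Icc fun x => (hC x).mono (Icc_subset_Icc_left hs.1))
    |>.clm_apply_of_isCompact isCompact_Icc (hUb · s hs)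

theorem add_integral_sub_eq_riccatiRep_sub {P : ℝ → X₁ →L[ℝ] X₂}
    (hUb : ∀ y, ∀ t ∈ Icc a T, ContinuousOn (fun s => Ub t s y) (Icc t T))
    (hC : ∀ x, ContinuousOn (fun t => C t x) (Icc a T))
    (hP : ∀ x, ContinuousOn (fun t => P t x) (Icc a T)) (ht : t ∈ Icc a T) {x : X₁} {w : ℝ → X₁}
    (hU : ContinuousOn (fun r => U r t x) (Icc t T)) (hw : ContinuousOn w (Icc t T)) :
    Ub t T (G (U T t x)) + ∫ r in t..T, Ub t r (C r (U r t x) - P r (w r)) =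
      riccatiRep Ub C G T U t x - ∫ r in t..T, Ub t r (P r (w r)) := by
  simp only [map_sub]
  rw [integral_sub ((continuousOn_riccatiIntegrand hUb hC ht hU).intervalIntegrable_of_Icc ht.2)
    ((continuousOn_riccatiIntegrand hUb hP ht hw).intervalIntegrable_of_Icc ht.2), riccatiRep,
    add_sub_assoc]

theorem apply_riccatiRep
    (hUbcomp : ∀ t r s, a ≤ t → t ≤ r → r ≤ s → s ≤ T → Ub t s = (Ub t r).comp (Ub r s))
    (hUb : ∀ y, ∀ t ∈ Icc a T, ContinuousOn (fun s => Ub t s y) (Icc t T))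
    (hC : ∀ x, ContinuousOn (fun t => C t x) (Icc a T))
    (hΨ₁ : ∀ x, ∀ s ∈ Icc a T, ContinuousOn (fun t => Ψ t s x) (Icc s T))
    (ht : a ≤ t) {σ : ℝ} (hσ : σ ∈ Icc t T) (v : X₁) :
    Ub t σ (riccatiRep Ub C G T Ψ σ v) =
      Ub t T (G (Ψ T σ v)) + ∫ r in σ..T, Ub t r (C r (Ψ r σ v)) := by
  have hσ' : σ ∈ Icc a T := ⟨ht.trans hσ.1, hσ.2⟩
  have hint : IntervalIntegrable (fun r => Ub σ r (C r (Ψ r σ v))) volume σ T :=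
    (continuousOn_riccatiIntegrand hUb hC hσ' (hΨ₁ v σ hσ')).intervalIntegrable_of_Icc hσ.2
  rw [riccatiRep, map_add, ← (Ub t σ).intervalIntegral_comp_comm hint,
    hUbcomp t σ T ht hσ.1 hσ.2 le_rfl]
  congr 1
  refine integral_congr fun r hr => ?_
  rw [uIcc_of_le hσ.2] at hr
  simp only [hUbcomp t σ r ht hσ.1 hr.1 hr.2, ContinuousLinearMap.comp_apply]

theorem integrableOn_triangleIntegrand {MΨ : ℝ}
    (hUb : ∀ y, ∀ t ∈ Icc a T, ContinuousOn (fun s => Ub t s y) (Icc t T))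
    (hC : ∀ x, ContinuousOn (fun t => C t x) (Icc a T))
    (hΨid : ∀ s ∈ Icc a T, Ψ s s = .id ℝ X₁)
    (hΨbdd : ∀ s t, a ≤ s → s ≤ t → t ≤ T → ‖Ψ t s‖ ≤ MΨ)
    (hΨ₁ : ∀ x, ∀ s ∈ Icc a T, ContinuousOn (fun t => Ψ t s x) (Icc s T))
    (hΨ₂ : ∀ x, ∀ t ∈ Icc a T, ContinuousOn (fun s => Ψ t s x) (Icc a t))
    (ht : t ∈ Icc a T) {y : ℝ → X₁} (hy : ContinuousOn y (Icc t T)) :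
    IntegrableOn (uncurry fun r σ => Ub t r (C r (extendById Ψ r σ (y σ))))
      (Icc t T ×ˢ Icc t T) := by
  have hsub : Icc t T ⊆ Icc a T := Icc_subset_Icc_left ht.1
  obtain ⟨MUb, hUbM⟩ := isCompact_Icc.exists_norm_le_of_continuousOn_apply (hUb · t ht)
  obtain ⟨MC, hCM⟩ :=
    isCompact_Icc.exists_norm_le_of_continuousOn_apply fun x => (hC x).mono hsub
  obtain ⟨My, hyM⟩ := isCompact_Icc.exists_bound_of_continuousOn hy
  refine integrableOn_uncurry_of_continuousOn_of_norm_le (M := MUb * (MC * (max MΨ 1 * My)))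
    ht.2 (fun σ hσ => ?_) (fun r hr => ?_) (fun r hr σ hσ => ?_)
  · refine continuousOn_riccatiIntegrand hUb hC ht ?_
    exact continuousOn_extendById_apply_left (fun s hs => hΨid s (hsub hs))
      (hΨ₁ · σ (hsub hσ)) hσ.2 (y σ)
  · exact ((Ub t r).comp (C r)).continuous.comp_continuousOn <|
      hy.clm_apply_of_isCompact isCompact_Icc <| continuousOn_extendById_apply_right
        (hΨid r (hsub hr)) fun x => (hΨ₂ x r (hsub hr)).mono (Icc_subset_Icc_left ht.1)
  · have hΨM : ‖extendById Ψ r σ‖ ≤ max MΨ 1 :=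
      norm_extendById_le (fun s t h₁ => hΨbdd s t (ht.1.trans h₁)) hr hσ
    exact (Ub t r).le_of_opNorm_le_of_le (hUbM r hr) <| (C r).le_of_opNorm_le_of_le (hCM r hr) <|
      (extendById Ψ r σ).le_of_opNorm_le_of_le hΨM (hyM σ hσ)

theorem apply_riccatiRep_eqOn
    (hUbcomp : ∀ t r s, a ≤ t → t ≤ r → r ≤ s → s ≤ T → Ub t s = (Ub t r).comp (Ub r s))
    (hUb : ∀ y, ∀ t ∈ Icc a T, ContinuousOn (fun s => Ub t s y) (Icc t T))
    (hC : ∀ x, ContinuousOn (fun t => C t x) (Icc a T))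
    (hΨ₁ : ∀ x, ∀ s ∈ Icc a T, ContinuousOn (fun t => Ψ t s x) (Icc s T))
    (ht : a ≤ t) (y : ℝ → X₁) :
    EqOn (fun σ => Ub t σ (riccatiRep Ub C G T Ψ σ (y σ)))
      (fun σ => Ub t T (G (Ψ T σ (y σ))) + ∫ r in σ..T, Ub t r (C r (extendById Ψ r σ (y σ))))
      (Icc t T) := by
  intro σ hσ
  simp only [apply_riccatiRep hUbcomp hUb hC hΨ₁ ht hσ]
  congr 1
  refine integral_congr fun r hr => ?_
  rw [uIcc_of_le hσ.2] at hr
  simp only [extendById_of_le hr.1]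

theorem intervalIntegrable_apply_riccatiRep {MΨ : ℝ}
    (hUbcomp : ∀ t r s, a ≤ t → t ≤ r → r ≤ s → s ≤ T → Ub t s = (Ub t r).comp (Ub r s))
    (hUb : ∀ y, ∀ t ∈ Icc a T, ContinuousOn (fun s => Ub t s y) (Icc t T))
    (hC : ∀ x, ContinuousOn (fun t => C t x) (Icc a T))
    (hΨid : ∀ s ∈ Icc a T, Ψ s s = .id ℝ X₁)
    (hΨbdd : ∀ s t, a ≤ s → s ≤ t → t ≤ T → ‖Ψ t s‖ ≤ MΨ)
    (hΨ₁ : ∀ x, ∀ s ∈ Icc a T, ContinuousOn (fun t => Ψ t s x) (Icc s T))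
    (hΨ₂ : ∀ x, ∀ t ∈ Icc a T, ContinuousOn (fun s => Ψ t s x) (Icc a t))
    (ht : t ∈ Icc a T) {y : ℝ → X₁} (hy : ContinuousOn y (Icc t T)) :
    IntervalIntegrable (fun σ => Ub t σ (riccatiRep Ub C G T Ψ σ (y σ))) volume t T := by
  have hf := integrableOn_triangleIntegrand hUb hC hΨid hΨbdd hΨ₁ hΨ₂ ht hy
  refine ((intervalIntegrable_terminalTerm (Ub := Ub) (G := G) hΨ₂ ht hy).add
    (intervalIntegrable_integral_triangle ht.2 hf)).congr_uIoo ?_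
  rw [uIoo_of_le ht.2]
  exact (apply_riccatiRep_eqOn hUbcomp hUb hC hΨ₁ ht.1 y).symm.mono Ioo_subset_Icc_self

theorem riccatiRep_eq_sub_integral {MΨ : ℝ}
    (hUbcomp : ∀ t r s, a ≤ t → t ≤ r → r ≤ s → s ≤ T → Ub t s = (Ub t r).comp (Ub r s))
    (hUb : ∀ y, ∀ t ∈ Icc a T, ContinuousOn (fun s => Ub t s y) (Icc t T))
    (hC : ∀ x, ContinuousOn (fun t => C t x) (Icc a T))
    (hΨid : ∀ s ∈ Icc a T, Ψ s s = .id ℝ X₁)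
    (hΨbdd : ∀ s t, a ≤ s → s ≤ t → t ≤ T → ‖Ψ t s‖ ≤ MΨ)
    (hΨ₁ : ∀ x, ∀ s ∈ Icc a T, ContinuousOn (fun t => Ψ t s x) (Icc s T))
    (hΨ₂ : ∀ x, ∀ t ∈ Icc a T, ContinuousOn (fun s => Ψ t s x) (Icc a t))
    (ht : t ∈ Icc a T) {y : ℝ → X₁} (hy : ContinuousOn y (Icc t T))
    {x : X₁} (hU : ContinuousOn (fun r => U r t x) (Icc t T))
    (hΨU : ∀ r ∈ Icc t T, Ψ r t x = U r t x - ∫ σ in t..r, Ψ r σ (y σ)) :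
    riccatiRep Ub C G T Ψ t x = riccatiRep Ub C G T U t x -
      ∫ σ in t..T, Ub t σ (riccatiRep Ub C G T Ψ σ (y σ)) := by
  set f : ℝ → ℝ → X₂ := fun r σ => Ub t r (C r (extendById Ψ r σ (y σ)))
  have hf := integrableOn_triangleIntegrand hUb hC hΨid hΨbdd hΨ₁ hΨ₂ ht hy
  have hpath : ∀ r ∈ Icc t T, ∀ L : X₁ →L[ℝ] X₂,
      L (Ψ r t x) = L (U r t x) - ∫ σ in t..r, L (Ψ r σ (y σ)) := fun r hr L => by
    rw [hΨU r hr, map_sub, L.intervalIntegral_comp_comm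
      ((continuousOn_family_apply_right hΨ₂ ht.1 hy hr).intervalIntegrable_of_Icc hr.1)]
  have hG := hpath T ⟨ht.2, le_rfl⟩ ((Ub t T).comp G)
  have hCr : ∀ r ∈ Icc t T,
      Ub t r (C r (Ψ r t x)) = Ub t r (C r (U r t x)) - ∫ σ in t..r, f r σ := fun r hr => by
    refine (hpath r hr ((Ub t r).comp (C r))).trans (congrArg _ (integral_congr fun σ hσ => ?_))
    rw [uIcc_of_le hr.1] at hσ
    simp only [f, extendById_of_le hσ.2, ContinuousLinearMap.comp_apply]
  have hCU : IntervalIntegrable (fun r => Ub t r (C r (U r t x))) volume t T :=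
    (continuousOn_riccatiIntegrand hUb hC ht hU).intervalIntegrable_of_Icc ht.2
  have hCΨ : IntervalIntegrable (fun r => Ub t r (C r (Ψ r t x))) volume t T :=
    (continuousOn_riccatiIntegrand hUb hC ht (hΨ₁ x t ht)).intervalIntegrable_of_Icc ht.2
  have hinner : IntervalIntegrable (fun r => ∫ σ in t..r, f r σ) volume t T :=
    (hCU.sub hCΨ).congr_uIoo fun r hr => by
      rw [uIoo_of_le ht.2] at hr
      simp only [hCr r (Ioo_subset_Icc_self hr), sub_sub_cancel]
  have hC' : ∫ r in t..T, Ub t r (C r (Ψ r t x)) =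
      (∫ r in t..T, Ub t r (C r (U r t x))) - ∫ r in t..T, ∫ σ in t..r, f r σ := by
    refine (integral_congr fun r hr => ?_).trans (integral_sub hCU hinner)
    exact hCr r (by rwa [uIcc_of_le ht.2] at hr)
  have hσ : ∫ σ in t..T, Ub t σ (riccatiRep Ub C G T Ψ σ (y σ)) =
      (∫ σ in t..T, Ub t T (G (Ψ T σ (y σ)))) + ∫ σ in t..T, ∫ r in σ..T, f r σ := by
    rw [← integral_add (intervalIntegrable_terminalTerm (Ub := Ub) (G := G) hΨ₂ ht hy)
      (intervalIntegrable_integral_triangle ht.2 hf)]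
    refine integral_congr ?_
    rw [uIcc_of_le ht.2]
    exact apply_riccatiRep_eqOn hUbcomp hUb hC hΨ₁ ht.1 y
  simp only [ContinuousLinearMap.comp_apply] at hG
  rw [riccatiRep, riccatiRep, hG, hC', hσ, ← integral_integral_swap_triangle ht.2 hf]
  abel

end RiccatiRepresentation

theorem riccati_solution_representation_one_general
    {X₁ X₂ : Type*}
    [NormedAddCommGroup X₁] [NormedSpace ℝ X₁] [CompleteSpace X₁]
    [NormedAddCommGroup X₂] [NormedSpace ℝ X₂] [CompleteSpace X₂]
    (T : ℝ)
    -- forward evolution family in L(X₁): strongly continuous, uniformly bounded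
    (Ul : ℝ → ℝ → X₁ →L[ℝ] X₁)
    (MUl : ℝ) (hUlbdd : ∀ s t : ℝ, 0 ≤ s → s ≤ t → t ≤ T → ‖Ul t s‖ ≤ MUl)
    (hUlsc₁ : ∀ x : X₁, ∀ s ∈ Set.Icc 0 T, ContinuousOn (fun t => Ul t s x) (Set.Icc s T))
    -- backward evolution family in L(X₂): strongly continuous, uniformly bounded
    (Ub : ℝ → ℝ → X₂ →L[ℝ] X₂)
    (hUbcomp : ∀ t r s : ℝ, 0 ≤ t → t ≤ r → r ≤ s → s ≤ T →
      Ub t s = (Ub t r).comp (Ub r s))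
    (MUb : ℝ) (hUbbdd : ∀ t s : ℝ, 0 ≤ t → t ≤ s → s ≤ T → ‖Ub t s‖ ≤ MUb)
    (hUbsc₂ : ∀ y : X₂, ∀ t ∈ Set.Icc 0 T, ContinuousOn (fun s => Ub t s y) (Set.Icc t T))
    -- strongly continuous coefficients
    (C : ℝ → X₁ →L[ℝ] X₂)
    (hCsc : ∀ x : X₁, ContinuousOn (fun t => C t x) (Set.Icc 0 T))
    (B : ℝ → X₂ →L[ℝ] X₁)
    (hBsc : ∀ y : X₂, ContinuousOn (fun t => B t y) (Set.Icc 0 T))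
    (G : X₁ →L[ℝ] X₂)
    -- a strongly continuous operator function P
    (P : ℝ → X₁ →L[ℝ] X₂)
    (hPsc : ∀ x : X₁, ContinuousOn (fun t => P t x) (Set.Icc 0 T))
    -- the forward evolution family Ψ⃖ perturbed by -B·P
    (Ψl : ℝ → ℝ → X₁ →L[ℝ] X₁)
    (hΨlid : ∀ s ∈ Set.Icc 0 T, Ψl s s = ContinuousLinearMap.id ℝ X₁)
    (MΨl : ℝ) (hΨlbdd : ∀ s t : ℝ, 0 ≤ s → s ≤ t → t ≤ T → ‖Ψl t s‖ ≤ MΨl)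
    (hΨlsc₁ : ∀ x : X₁, ∀ s ∈ Set.Icc 0 T, ContinuousOn (fun t => Ψl t s x) (Set.Icc s T))
    (hΨlsc₂ : ∀ x : X₁, ∀ t ∈ Set.Icc 0 T, ContinuousOn (fun s => Ψl t s x) (Set.Icc 0 t))
    (hΨleq : ∀ x : X₁, ∀ s t : ℝ, 0 ≤ s → s ≤ t → t ≤ T →
      Ψl t s x = Ul t s x - ∫ r in s..t, Ψl t r (B r (P r (Ul r s x))))
    :
    -- P solves the Riccati integral equation iff it has the representation
      (∀ t ∈ Set.Icc 0 T, ∀ x : X₁,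
        P t x = Ub t T (G (Ul T t x)) +
          ∫ r in t..T, Ub t r (C r (Ul r t x) - P r (B r (P r (Ul r t x))))) ↔
      (∀ t ∈ Set.Icc 0 T, ∀ x : X₁,
        P t x = Ub t T (G (Ψl T t x)) + ∫ r in t..T, Ub t r (C r (Ψl r t x))) := by
  obtain ⟨MP, hPM⟩ := isCompact_Icc.exists_norm_le_of_continuousOn_apply hPsc
  obtain ⟨MB, hBM⟩ := isCompact_Icc.exists_norm_le_of_continuousOn_apply hBsc
  obtain ⟨MC, hCM⟩ := isCompact_Icc.exists_norm_le_of_continuousOn_apply hCsc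
  set y : ℝ → X₁ → ℝ → X₁ := fun t x σ => B σ (P σ (Ul σ t x))
  have hy : ∀ t ∈ Icc 0 T, ∀ x, ContinuousOn (y t x) (Icc t T) := fun t ht x =>
    ((hUlsc₁ x t ht).clm_apply_of_isCompact isCompact_Icc fun z =>
      (hPsc z).mono (Icc_subset_Icc_left ht.1)).clm_apply_of_isCompact isCompact_Icc fun z =>
        (hBsc z).mono (Icc_subset_Icc_left ht.1)
  have hyK : ∀ s ∈ Icc 0 T, ∀ v, ∀ σ ∈ Icc s T, ‖y s v σ‖ ≤ MB * (MP * MUl) * ‖v‖ :=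
    fun s hs v σ hσ => ((B σ).le_of_opNorm_le_of_le (hBM σ ⟨hs.1.trans hσ.1, hσ.2⟩) <|
      (P σ).le_of_opNorm_le_of_le (hPM σ ⟨hs.1.trans hσ.1, hσ.2⟩) <|
        (Ul σ s).le_of_opNorm_le (hUlbdd s σ hs.1 hσ.1 hσ.2) v).trans_eq (by ring)
  have hkey : ∀ t ∈ Icc 0 T, ∀ x, riccatiRep Ub C G T Ψl t x = riccatiRep Ub C G T Ul t x -
      ∫ σ in t..T, Ub t σ (riccatiRep Ub C G T Ψl σ (y t x σ)) := fun t ht x =>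
    riccatiRep_eq_sub_integral hUbcomp hUbsc₂ hCsc hΨlid hΨlbdd hΨlsc₁ hΨlsc₂ ht (hy t ht x)
      (hUlsc₁ x t ht) fun r hr => hΨleq x t r ht.1 hr.1 hr.2
  have hriccati : ∀ t ∈ Icc 0 T, ∀ x, Ub t T (G (Ul T t x)) +
      ∫ r in t..T, Ub t r (C r (Ul r t x) - P r (B r (P r (Ul r t x)))) =
        riccatiRep Ub C G T Ul t x - ∫ σ in t..T, Ub t σ (P σ (y t x σ)) := fun t ht x =>
    add_integral_sub_eq_riccatiRep_sub hUbsc₂ hCsc hPsc ht (hUlsc₁ x t ht) (hy t ht x)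
  refine (forall₂_congr fun t ht => forall_congr' fun x => by rw [hriccati t ht x]).trans
    ⟨fun h t ht x => ?_, fun h t ht x => ?_⟩
  · exact eq_of_volterra (fun s hs v => (P s).le_of_opNorm_le (hPM s hs) v)
      (norm_riccatiRep_le hUbbdd hΨlbdd hCM) hUbbdd hyK h hkey
      (fun s hs v =>
        (continuousOn_riccatiIntegrand hUbsc₂ hPsc hs (hy s hs v)).intervalIntegrable_of_Icc hs.2)
      (fun s hs v => intervalIntegrable_apply_riccatiRep hUbcomp hUbsc₂ hCsc hΨlid hΨlbdd hΨlsc₁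
        hΨlsc₂ hs (hy s hs v)) ht x
  · have hrep : ∀ t ∈ Icc 0 T, ∀ x, P t x = riccatiRep Ub C G T Ψl t x := h
    rw [hrep t ht x, hkey t ht x]
    congr 1
    refine integral_congr fun σ hσ => ?_
    rw [uIcc_of_le ht.2] at hσ
    rw [hrep σ ⟨ht.1.trans hσ.1, hσ.2⟩]

/-- `P` solves the backward Riccati integral equation iff
`P(t) = U⃗_{t,T} G Ψ⃖_{T,t} + ∫_t^T U⃗_{t,r} C(r) Ψ⃖_{r,t} dr`. -/
theorem riccati_solution_representation_one
    {X₁ X₂ : Type*}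
    [NormedAddCommGroup X₁] [NormedSpace ℝ X₁] [CompleteSpace X₁]
    [NormedAddCommGroup X₂] [NormedSpace ℝ X₂] [CompleteSpace X₂]
    (T : ℝ) (hT : 0 ≤ T)
    -- forward evolution family in L(X₁): strongly continuous, uniformly bounded
    (Ul : ℝ → ℝ → X₁ →L[ℝ] X₁)
    (hUlid : ∀ s ∈ Set.Icc 0 T, Ul s s = ContinuousLinearMap.id ℝ X₁)
    (hUlcomp : ∀ s r t : ℝ, 0 ≤ s → s ≤ r → r ≤ t → t ≤ T →
      Ul t s = (Ul t r).comp (Ul r s))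
    (MUl : ℝ) (hUlbdd : ∀ s t : ℝ, 0 ≤ s → s ≤ t → t ≤ T → ‖Ul t s‖ ≤ MUl)
    (hUlsc₁ : ∀ x : X₁, ∀ s ∈ Set.Icc 0 T, ContinuousOn (fun t => Ul t s x) (Set.Icc s T))
    (hUlsc₂ : ∀ x : X₁, ∀ t ∈ Set.Icc 0 T, ContinuousOn (fun s => Ul t s x) (Set.Icc 0 t))
    -- backward evolution family in L(X₂): strongly continuous, uniformly bounded
    (Ub : ℝ → ℝ → X₂ →L[ℝ] X₂)
    (hUbid : ∀ s ∈ Set.Icc 0 T, Ub s s = ContinuousLinearMap.id ℝ X₂)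
    (hUbcomp : ∀ t r s : ℝ, 0 ≤ t → t ≤ r → r ≤ s → s ≤ T →
      Ub t s = (Ub t r).comp (Ub r s))
    (MUb : ℝ) (hUbbdd : ∀ t s : ℝ, 0 ≤ t → t ≤ s → s ≤ T → ‖Ub t s‖ ≤ MUb)
    (hUbsc₁ : ∀ y : X₂, ∀ s ∈ Set.Icc 0 T, ContinuousOn (fun t => Ub t s y) (Set.Icc 0 s))
    (hUbsc₂ : ∀ y : X₂, ∀ t ∈ Set.Icc 0 T, ContinuousOn (fun s => Ub t s y) (Set.Icc t T))
    -- strongly continuous coefficients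
    (C : ℝ → X₁ →L[ℝ] X₂)
    (hCsc : ∀ x : X₁, ContinuousOn (fun t => C t x) (Set.Icc 0 T))
    (B : ℝ → X₂ →L[ℝ] X₁)
    (hBsc : ∀ y : X₂, ContinuousOn (fun t => B t y) (Set.Icc 0 T))
    (G : X₁ →L[ℝ] X₂)
    -- a strongly continuous operator function P
    (P : ℝ → X₁ →L[ℝ] X₂)
    (hPsc : ∀ x : X₁, ContinuousOn (fun t => P t x) (Set.Icc 0 T))
    -- the forward evolution family Ψ⃖ perturbed by -B·P
    (Ψl : ℝ → ℝ → X₁ →L[ℝ] X₁)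
    (hΨlid : ∀ s ∈ Set.Icc 0 T, Ψl s s = ContinuousLinearMap.id ℝ X₁)
    (hΨlcomp : ∀ s r t : ℝ, 0 ≤ s → s ≤ r → r ≤ t → t ≤ T →
      Ψl t s = (Ψl t r).comp (Ψl r s))
    (MΨl : ℝ) (hΨlbdd : ∀ s t : ℝ, 0 ≤ s → s ≤ t → t ≤ T → ‖Ψl t s‖ ≤ MΨl)
    (hΨlsc₁ : ∀ x : X₁, ∀ s ∈ Set.Icc 0 T, ContinuousOn (fun t => Ψl t s x) (Set.Icc s T))
    (hΨlsc₂ : ∀ x : X₁, ∀ t ∈ Set.Icc 0 T, ContinuousOn (fun s => Ψl t s x) (Set.Icc 0 t))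
    (hΨleq : ∀ x : X₁, ∀ s t : ℝ, 0 ≤ s → s ≤ t → t ≤ T →
      Ψl t s x = Ul t s x - ∫ r in s..t, Ψl t r (B r (P r (Ul r s x))))
    :
    -- P solves the Riccati integral equation iff it has the representation
      (∀ t ∈ Set.Icc 0 T, ∀ x : X₁,
        P t x = Ub t T (G (Ul T t x)) +
          ∫ r in t..T, Ub t r (C r (Ul r t x) - P r (B r (P r (Ul r t x))))) ↔
      (∀ t ∈ Set.Icc 0 T, ∀ x : X₁,
        P t x = Ub t T (G (Ψl T t x)) + ∫ r in t..T, Ub t r (C r (Ψl r t x))) :=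
  riccati_solution_representation_one_general T Ul MUl hUlbdd hUlsc₁ Ub hUbcomp MUb hUbbdd hUbsc₂ C
    hCsc B hBsc G P hPsc Ψl hΨlid MΨl hΨlbdd hΨlsc₁ hΨlsc₂ hΨleq
end

section
/- Let Q₀ : [a,b] → L(X₁,X₂) and B : [a,b] → L(X₂,X₁) be norm-continuous, and let (Q^{(1)}_{s,t})_{a≤t≤s≤b} ⊂ L(X₁), (Q^{(2)}_{s,t})_{a≤t≤s≤b} ⊂ L(X₂) be uniformly bounded families with ‖Q^{(i)}_{s,t}‖ ≤ M_i. Suppose ρ > 0 satisfies ‖Q₀‖_u + ρ²(b−a)M₁M₂‖B‖_u ≤ ρ and 2ρ(b−a)M₁M₂‖B‖_u < 1. Then the map Γ(P)(t) = Q₀(t) − ∫_t^b Q^{(2)}_{r,t} P(r) B(r) P(r) Q^{(1)}_{r,t} dr maps the closed ball B_ρ = {P : ‖P‖_u ≤ ρ} of C_u([a,b]; L(X₁,X₂)) into itself and is a contraction on it with Lipschitz constant at most 2ρ(b−a)M₁M₂‖B‖_u. -/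
open MeasureTheory intervalIntegral

lemma strongCont_apply {E F : Type*} [NormedAddCommGroup E] [NormedSpace ℝ E]
    [NormedAddCommGroup F] [NormedSpace ℝ F]
    (P : ℝ → E →L[ℝ] F) (f : ℝ → E) (s : Set ℝ) (C : ℝ)
    (hP : ∀ x, ContinuousOn (fun t => P t x) s) (hPb : ∀ t ∈ s, ‖P t‖ ≤ C)
    (hf : ContinuousOn f s) : ContinuousOn (fun t => P t (f t)) s := by
  intro t₀ ht₀
  have h1 : ContinuousWithinAt (fun t => P t (f t₀)) s t₀ := hP (f t₀) t₀ ht₀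
  have h2 : Filter.Tendsto (fun t => P t (f t) - P t (f t₀)) (nhdsWithin t₀ s) (nhds 0) := by
    have hb : ∀ᶠ t in nhdsWithin t₀ s, ‖P t (f t) - P t (f t₀)‖ ≤ C * ‖f t - f t₀‖ := by
      filter_upwards [self_mem_nhdsWithin] with t ht
      calc ‖P t (f t) - P t (f t₀)‖ = ‖P t (f t - f t₀)‖ := by rw [map_sub]
        _ ≤ ‖P t‖ * ‖f t - f t₀‖ := (P t).le_opNorm _
        _ ≤ C * ‖f t - f t₀‖ :=
            mul_le_mul_of_nonneg_right (hPb t ht) (norm_nonneg _)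
    have hlim : Filter.Tendsto (fun t => C * ‖f t - f t₀‖) (nhdsWithin t₀ s) (nhds 0) := by
      have h0 : Filter.Tendsto (fun t => f t - f t₀) (nhdsWithin t₀ s) (nhds 0) := by
        have := ((hf t₀ ht₀).sub (continuousWithinAt_const (b := f t₀)))
        have h' := this.tendsto
        rw [Pi.sub_apply, sub_self] at h'
        exact h'
      simpa using (h0.norm.const_mul C)
    exact squeeze_zero_norm' hb hlim
  have h3 := h2.add h1
  simp only [sub_add_cancel, zero_add] at h3
  exact h3

lemma riccati_integrand_integrable {X₁ X₂ : Type*}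
    [NormedAddCommGroup X₁] [NormedSpace ℝ X₁]
    [NormedAddCommGroup X₂] [NormedSpace ℝ X₂]
    (a b : ℝ) (Q1 : ℝ → ℝ → X₁ →L[ℝ] X₁) (Q2 : ℝ → ℝ → X₂ →L[ℝ] X₂) (M₂ : ℝ)
    (hQ2bdd : ∀ t s : ℝ, a ≤ t → t ≤ s → s ≤ b → ‖Q2 s t‖ ≤ M₂)
    (hQ1sc₁ : ∀ x : X₁, ∀ t ∈ Set.Icc a b, ContinuousOn (fun s => Q1 s t x) (Set.Icc t b))
    (hQ2sc₁ : ∀ y : X₂, ∀ t ∈ Set.Icc a b, ContinuousOn (fun s => Q2 s t y) (Set.Icc t b))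
    (B : ℝ → X₂ →L[ℝ] X₁) (hBsc : ∀ y, ContinuousOn (fun t => B t y) (Set.Icc a b))
    (nB : ℝ) (hnB : ∀ t ∈ Set.Icc a b, ‖B t‖ ≤ nB)
    (P : ℝ → X₁ →L[ℝ] X₂) (hPc : ∀ x, ContinuousOn (fun t => P t x) (Set.Icc a b))
    (ρ : ℝ) (hPb : ∀ t ∈ Set.Icc a b, ‖P t‖ ≤ ρ)
    (t : ℝ) (ht : t ∈ Set.Icc a b) (x : X₁) :
    IntervalIntegrable (fun r => Q2 r t (P r (B r (P r (Q1 r t x))))) volume t b := by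
  have hsub : Set.Icc t b ⊆ Set.Icc a b := Set.Icc_subset_Icc ht.1 le_rfl
  have h0 : ContinuousOn (fun r => Q1 r t x) (Set.Icc t b) := hQ1sc₁ x t ht
  have h1 : ContinuousOn (fun r => P r (Q1 r t x)) (Set.Icc t b) :=
    strongCont_apply P _ _ ρ (fun y => (hPc y).mono hsub) (fun r hr => hPb r (hsub hr)) h0
  have h2 : ContinuousOn (fun r => B r (P r (Q1 r t x))) (Set.Icc t b) :=
    strongCont_apply B _ _ nB (fun y => (hBsc y).mono hsub) (fun r hr => hnB r (hsub hr)) h1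
  have h3 : ContinuousOn (fun r => P r (B r (P r (Q1 r t x)))) (Set.Icc t b) :=
    strongCont_apply P _ _ ρ (fun y => (hPc y).mono hsub) (fun r hr => hPb r (hsub hr)) h2
  have h4 : ContinuousOn (fun r => Q2 r t (P r (B r (P r (Q1 r t x))))) (Set.Icc t b) :=
    strongCont_apply (fun r => Q2 r t) _ _ M₂ (fun y => hQ2sc₁ y t ht)
      (fun r hr => hQ2bdd t r ht.1 hr.1 hr.2) h3
  apply ContinuousOn.intervalIntegrable
  rwa [Set.uIcc_of_le ht.2]

/-- the quadratic map `Γ(P)(t) = Q₀(t) − ∫_t^b Q⁽²⁾_{r,t} P(r)B(r)P(r) Q⁽¹⁾_{r,t} dr`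
maps the ball `B_ρ` of `C_u([a,b];L(X₁,X₂))` into itself and is a contraction with
Lipschitz constant at most `2ρ(b−a)M₁M₂‖B‖ᵤ`. -/
theorem riccati_gamma_contraction
    {X₁ X₂ : Type*}
    [NormedAddCommGroup X₁] [NormedSpace ℝ X₁] [CompleteSpace X₁]
    [NormedAddCommGroup X₂] [NormedSpace ℝ X₂] [CompleteSpace X₂]
    (a b : ℝ) (hab : a ≤ b)
    -- uniformly bounded families Q⁽¹⁾, Q⁽²⁾, strongly continuous in each variable
    (Q1 : ℝ → ℝ → X₁ →L[ℝ] X₁) (Q2 : ℝ → ℝ → X₂ →L[ℝ] X₂)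
    (M₁ M₂ : ℝ)
    (hQ1bdd : ∀ t s : ℝ, a ≤ t → t ≤ s → s ≤ b → ‖Q1 s t‖ ≤ M₁)
    (hQ2bdd : ∀ t s : ℝ, a ≤ t → t ≤ s → s ≤ b → ‖Q2 s t‖ ≤ M₂)
    (hQ1sc₁ : ∀ x : X₁, ∀ t ∈ Set.Icc a b, ContinuousOn (fun s => Q1 s t x) (Set.Icc t b))
    (hQ1sc₂ : ∀ x : X₁, ∀ s ∈ Set.Icc a b, ContinuousOn (fun t => Q1 s t x) (Set.Icc a s))
    (hQ2sc₁ : ∀ y : X₂, ∀ t ∈ Set.Icc a b, ContinuousOn (fun s => Q2 s t y) (Set.Icc t b))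
    (hQ2sc₂ : ∀ y : X₂, ∀ s ∈ Set.Icc a b, ContinuousOn (fun t => Q2 s t y) (Set.Icc a s))
    -- coefficient B with sup-norm bound
    (B : ℝ → X₂ →L[ℝ] X₁)
    (hBsc : ∀ y : X₂, ContinuousOn (fun t => B t y) (Set.Icc a b))
    (nB : ℝ) (hnB : ∀ t ∈ Set.Icc a b, ‖B t‖ ≤ nB)
    -- free term Q₀ with sup-norm bound
    (Q0 : ℝ → X₁ →L[ℝ] X₂)
    (hQ0sc : ∀ x : X₁, ContinuousOn (fun t => Q0 t x) (Set.Icc a b))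
    (nQ0 : ℝ) (hnQ0 : ∀ t ∈ Set.Icc a b, ‖Q0 t‖ ≤ nQ0)
    -- the number ρ
    (ρ : ℝ) (hρ₁ : nQ0 + ρ ^ 2 * (b - a) * M₁ * M₂ * nB ≤ ρ)
    (hρ₂ : 2 * ρ * (b - a) * M₁ * M₂ * nB < 1) :
    -- Γ maps the ball B_ρ into itself
    (∀ P : ℝ → X₁ →L[ℝ] X₂,
      (∀ x : X₁, ContinuousOn (fun t => P t x) (Set.Icc a b)) →
      (∀ t ∈ Set.Icc a b, ‖P t‖ ≤ ρ) →
      ∀ t ∈ Set.Icc a b, ∀ x : X₁,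
        ‖Q0 t x - ∫ r in t..b, Q2 r t (P r (B r (P r (Q1 r t x))))‖ ≤ ρ * ‖x‖) ∧
    -- Γ is a contraction on B_ρ with constant 2ρ(b-a)M₁M₂‖B‖ᵤ
    (∀ P₁ P₂ : ℝ → X₁ →L[ℝ] X₂,
      (∀ x : X₁, ContinuousOn (fun t => P₁ t x) (Set.Icc a b)) →
      (∀ x : X₁, ContinuousOn (fun t => P₂ t x) (Set.Icc a b)) →
      (∀ t ∈ Set.Icc a b, ‖P₁ t‖ ≤ ρ) → (∀ t ∈ Set.Icc a b, ‖P₂ t‖ ≤ ρ) →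
      ∀ d : ℝ, (∀ t ∈ Set.Icc a b, ‖P₁ t - P₂ t‖ ≤ d) →
      ∀ t ∈ Set.Icc a b, ∀ x : X₁,
        ‖(Q0 t x - ∫ r in t..b, Q2 r t (P₁ r (B r (P₁ r (Q1 r t x))))) -
          (Q0 t x - ∫ r in t..b, Q2 r t (P₂ r (B r (P₂ r (Q1 r t x)))))‖ ≤
          2 * ρ * (b - a) * M₁ * M₂ * nB * d * ‖x‖) := by
  have haa : a ∈ Set.Icc a b := ⟨le_refl a, hab⟩
  have hM₁0 : 0 ≤ M₁ := le_trans (norm_nonneg _) (hQ1bdd a a le_rfl le_rfl hab)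
  have hM₂0 : 0 ≤ M₂ := le_trans (norm_nonneg _) (hQ2bdd a a le_rfl le_rfl hab)
  have hnB0 : 0 ≤ nB := le_trans (norm_nonneg _) (hnB a haa)
  have hnQ00 : 0 ≤ nQ0 := le_trans (norm_nonneg _) (hnQ0 a haa)
  have hρ0 : 0 ≤ ρ := by
    have hX : 0 ≤ ρ ^ 2 * (b - a) * M₁ * M₂ * nB :=
      mul_nonneg (mul_nonneg (mul_nonneg (mul_nonneg (sq_nonneg ρ)
        (sub_nonneg.2 hab)) hM₁0) hM₂0) hnB0
    linarith
  constructor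
  · -- Γ maps the ball into itself
    intro P hPc hPb t ht x
    have htb : t ≤ b := ht.2
    have hC0 : 0 ≤ M₂ * (ρ * (nB * (ρ * (M₁ * ‖x‖)))) :=
      mul_nonneg hM₂0 (mul_nonneg hρ0 (mul_nonneg hnB0
        (mul_nonneg hρ0 (mul_nonneg hM₁0 (norm_nonneg x)))))
    have hI : ‖∫ r in t..b, Q2 r t (P r (B r (P r (Q1 r t x))))‖
        ≤ (M₂ * (ρ * (nB * (ρ * (M₁ * ‖x‖))))) * |b - t| := by
      apply intervalIntegral.norm_integral_le_of_norm_le_const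
      intro r hr
      rw [Set.uIoc_of_le htb] at hr
      have hra : r ∈ Set.Icc a b := ⟨le_trans ht.1 hr.1.le, hr.2⟩
      have hv : ‖Q1 r t x‖ ≤ M₁ * ‖x‖ :=
        (Q1 r t).le_of_opNorm_le (hQ1bdd t r ht.1 hr.1.le hr.2) x
      have h1 : ‖P r (Q1 r t x)‖ ≤ ρ * (M₁ * ‖x‖) :=
        le_trans ((P r).le_of_opNorm_le (hPb r hra) _) (mul_le_mul_of_nonneg_left hv hρ0)
      have h2 : ‖B r (P r (Q1 r t x))‖ ≤ nB * (ρ * (M₁ * ‖x‖)) :=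
        le_trans ((B r).le_of_opNorm_le (hnB r hra) _) (mul_le_mul_of_nonneg_left h1 hnB0)
      have h3 : ‖P r (B r (P r (Q1 r t x)))‖ ≤ ρ * (nB * (ρ * (M₁ * ‖x‖))) :=
        le_trans ((P r).le_of_opNorm_le (hPb r hra) _) (mul_le_mul_of_nonneg_left h2 hρ0)
      exact le_trans ((Q2 r t).le_of_opNorm_le (hQ2bdd t r ht.1 hr.1.le hr.2) _)
        (mul_le_mul_of_nonneg_left h3 hM₂0)
    have habs : |b - t| ≤ b - a := by
      rw [abs_of_nonneg (by linarith)]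
      linarith [ht.1]
    calc ‖Q0 t x - ∫ r in t..b, Q2 r t (P r (B r (P r (Q1 r t x))))‖
        ≤ ‖Q0 t x‖ + ‖∫ r in t..b, Q2 r t (P r (B r (P r (Q1 r t x))))‖ := norm_sub_le _ _
      _ ≤ nQ0 * ‖x‖ + (M₂ * (ρ * (nB * (ρ * (M₁ * ‖x‖))))) * (b - a) :=
          add_le_add ((Q0 t).le_of_opNorm_le (hnQ0 t ht) x)
            (le_trans hI (mul_le_mul_of_nonneg_left habs hC0))
      _ = (nQ0 + ρ ^ 2 * (b - a) * M₁ * M₂ * nB) * ‖x‖ := by ring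
      _ ≤ ρ * ‖x‖ := mul_le_mul_of_nonneg_right hρ₁ (norm_nonneg x)
  · -- contraction estimate
    intro P₁ P₂ hP₁c hP₂c hP₁b hP₂b d hd t ht x
    have htb : t ≤ b := ht.2
    have hd0 : 0 ≤ d := le_trans (norm_nonneg _) (hd a haa)
    have hint₁ := riccati_integrand_integrable a b Q1 Q2 M₂ hQ2bdd hQ1sc₁ hQ2sc₁
      B hBsc nB hnB P₁ hP₁c ρ hP₁b t ht x
    have hint₂ := riccati_integrand_integrable a b Q1 Q2 M₂ hQ2bdd hQ1sc₁ hQ2sc₁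
      B hBsc nB hnB P₂ hP₂c ρ hP₂b t ht x
    have heq : (Q0 t x - ∫ r in t..b, Q2 r t (P₁ r (B r (P₁ r (Q1 r t x))))) -
          (Q0 t x - ∫ r in t..b, Q2 r t (P₂ r (B r (P₂ r (Q1 r t x))))) =
        ∫ r in t..b, (Q2 r t (P₂ r (B r (P₂ r (Q1 r t x)))) -
          Q2 r t (P₁ r (B r (P₁ r (Q1 r t x))))) := by
      rw [intervalIntegral.integral_sub hint₂ hint₁]
      abel
    rw [heq]
    set C : ℝ := M₂ * (d * (nB * (ρ * (M₁ * ‖x‖))) + ρ * (nB * (d * (M₁ * ‖x‖)))) with hC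
    have hC0 : 0 ≤ C :=
      mul_nonneg hM₂0 (add_nonneg
        (mul_nonneg hd0 (mul_nonneg hnB0 (mul_nonneg hρ0 (mul_nonneg hM₁0 (norm_nonneg x)))))
        (mul_nonneg hρ0 (mul_nonneg hnB0 (mul_nonneg hd0 (mul_nonneg hM₁0 (norm_nonneg x))))))
    have hI : ‖∫ r in t..b, (Q2 r t (P₂ r (B r (P₂ r (Q1 r t x)))) -
          Q2 r t (P₁ r (B r (P₁ r (Q1 r t x)))))‖ ≤ C * |b - t| := by
      apply intervalIntegral.norm_integral_le_of_norm_le_const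
      intro r hr
      rw [Set.uIoc_of_le htb] at hr
      have hra : r ∈ Set.Icc a b := ⟨le_trans ht.1 hr.1.le, hr.2⟩
      have hv : ‖Q1 r t x‖ ≤ M₁ * ‖x‖ :=
        (Q1 r t).le_of_opNorm_le (hQ1bdd t r ht.1 hr.1.le hr.2) x
      have hdr : ‖P₂ r - P₁ r‖ ≤ d := by
        rw [norm_sub_rev]; exact hd r hra
      have h1 : ‖P₂ r (Q1 r t x)‖ ≤ ρ * (M₁ * ‖x‖) :=
        le_trans ((P₂ r).le_of_opNorm_le (hP₂b r hra) _) (mul_le_mul_of_nonneg_left hv hρ0)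
      have h2 : ‖B r (P₂ r (Q1 r t x))‖ ≤ nB * (ρ * (M₁ * ‖x‖)) :=
        le_trans ((B r).le_of_opNorm_le (hnB r hra) _) (mul_le_mul_of_nonneg_left h1 hnB0)
      have hterm1 : ‖(P₂ r - P₁ r) (B r (P₂ r (Q1 r t x)))‖ ≤ d * (nB * (ρ * (M₁ * ‖x‖))) :=
        le_trans ((P₂ r - P₁ r).le_of_opNorm_le hdr _) (mul_le_mul_of_nonneg_left h2 hd0)
      have h3 : ‖(P₂ r - P₁ r) (Q1 r t x)‖ ≤ d * (M₁ * ‖x‖) :=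
        le_trans ((P₂ r - P₁ r).le_of_opNorm_le hdr _) (mul_le_mul_of_nonneg_left hv hd0)
      have h4 : ‖B r ((P₂ r - P₁ r) (Q1 r t x))‖ ≤ nB * (d * (M₁ * ‖x‖)) :=
        le_trans ((B r).le_of_opNorm_le (hnB r hra) _) (mul_le_mul_of_nonneg_left h3 hnB0)
      have hterm2 : ‖P₁ r (B r ((P₂ r - P₁ r) (Q1 r t x)))‖ ≤ ρ * (nB * (d * (M₁ * ‖x‖))) :=
        le_trans ((P₁ r).le_of_opNorm_le (hP₁b r hra) _) (mul_le_mul_of_nonneg_left h4 hρ0)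
      have key : P₂ r (B r (P₂ r (Q1 r t x))) - P₁ r (B r (P₁ r (Q1 r t x)))
          = (P₂ r - P₁ r) (B r (P₂ r (Q1 r t x))) +
            P₁ r (B r ((P₂ r - P₁ r) (Q1 r t x))) := by
        simp only [ContinuousLinearMap.sub_apply, map_sub]
        abel
      calc ‖Q2 r t (P₂ r (B r (P₂ r (Q1 r t x)))) - Q2 r t (P₁ r (B r (P₁ r (Q1 r t x))))‖
          = ‖Q2 r t (P₂ r (B r (P₂ r (Q1 r t x))) - P₁ r (B r (P₁ r (Q1 r t x))))‖ := by
            rw [map_sub]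
        _ ≤ M₂ * ‖P₂ r (B r (P₂ r (Q1 r t x))) - P₁ r (B r (P₁ r (Q1 r t x)))‖ :=
            (Q2 r t).le_of_opNorm_le (hQ2bdd t r ht.1 hr.1.le hr.2) _
        _ = M₂ * ‖(P₂ r - P₁ r) (B r (P₂ r (Q1 r t x))) +
              P₁ r (B r ((P₂ r - P₁ r) (Q1 r t x)))‖ := by rw [key]
        _ ≤ C := by
            rw [hC]
            exact mul_le_mul_of_nonneg_left
              (le_trans (norm_add_le _ _) (add_le_add hterm1 hterm2)) hM₂0
    have habs : |b - t| ≤ b - a := by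
      rw [abs_of_nonneg (by linarith)]
      linarith [ht.1]
    calc ‖∫ r in t..b, (Q2 r t (P₂ r (B r (P₂ r (Q1 r t x)))) -
          Q2 r t (P₁ r (B r (P₁ r (Q1 r t x)))))‖
        ≤ C * |b - t| := hI
      _ ≤ C * (b - a) := mul_le_mul_of_nonneg_left habs hC0
      _ = 2 * ρ * (b - a) * M₁ * M₂ * nB * d * ‖x‖ := by rw [hC]; ring
end
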